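/- For every Boolean function f: {0,1}^n → {0,1}, there exists a restriction ρ with |ρ^{-1}(*)| = O(λ(f)) such that λ(f|_ρ) = Ω(√(λ(f))), where λ denotes spectral sensitivity (the spectral norm of the adjacency matrix of the sensitivity graph of f). -/

import Mathlib

open Finset

section Core
variable {ι : Type} [Fintype ι] [DecidableEq ι]

/-- Flip the bits of `x` indexed by the block `B`. -/
def flipSet (x : ι → Bool) (B : Finset ι) : ι → Bool :=
  fun i => if i ∈ B then !(x i) else x i

/-- Sensitivity of `f` at input `x`. -/
def sensAt (f : (ι → Bool) → Bool) (x : ι → Bool) : ℕ :=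
  (univ.filter fun i => f (flipSet x {i}) ≠ f x).card

/-- Sensitivity of `f`. -/
def sens (f : (ι → Bool) → Bool) : ℕ :=
  univ.sup fun x => sensAt f x

/-- Block sensitivity of `f` at `x`: the maximal number of pairwise disjoint
sensitive blocks at `x`. -/
noncomputable def bsAt (f : (ι → Bool) → Bool) (x : ι → Bool) : ℕ :=
  sSup {r | ∃ B : Fin r → Finset ι,
    (∀ j, f (flipSet x (B j)) ≠ f x) ∧
    ∀ j₁ j₂, j₁ ≠ j₂ → Disjoint (B j₁) (B j₂)}

/-- Block sensitivity of `f`. -/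
noncomputable def blockSens (f : (ι → Bool) → Bool) : ℕ :=
  univ.sup fun x => bsAt f x

/-- `S` is a certificate for `f` at `x`: every input agreeing with `x` on `S`
 has the same `f`-value as `x`. -/
def IsCert (f : (ι → Bool) → Bool) (x : ι → Bool) (S : Finset ι) : Prop :=
  ∀ y : ι → Bool, (∀ i ∈ S, y i = x i) → f y = f x

/-- Certificate complexity of `f` at `x`. -/
noncomputable def certAt (f : (ι → Bool) → Bool) (x : ι → Bool) : ℕ :=
  sInf {c | ∃ S : Finset ι, S.card = c ∧ IsCert f x S}

/-- Certificate complexity of `f`. -/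
noncomputable def certC (f : (ι → Bool) → Bool) : ℕ :=
  univ.sup fun x => certAt f x

/-- 0-certificate complexity of `f`. -/
noncomputable def cert0 (f : (ι → Bool) → Bool) : ℕ :=
  (univ.filter fun x => f x = false).sup fun x => certAt f x

/-- 1-certificate complexity of `f`. -/
noncomputable def cert1 (f : (ι → Bool) → Bool) : ℕ :=
  (univ.filter fun x => f x = true).sup fun x => certAt f x

/-- The restriction of `f` by the partial assignment `ρ` (a variable `i` with
`ρ i = none` is left unset; otherwise it is fixed to the given value). The
restricted function depends only on the unset variables. -/
def restrictBF (f : (ι → Bool) → Bool) (ρ : ι → Option Bool) : (ι → Bool) → Bool :=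
  fun x => f fun i => (ρ i).getD (x i)

/-- Number of unset variables of a partial assignment. -/
def unsetCard (ρ : ι → Option Bool) : ℕ :=
  (univ.filter fun i => ρ i = none).card

end Core

/-- Adjacency matrix of the sensitivity graph of `f`: vertices are the inputs,
with an edge between `x` and `x^i` whenever `f(x) ≠ f(x^i)`. -/
noncomputable def sensMatrix {ι : Type} [Fintype ι] [DecidableEq ι]
    (f : (ι → Bool) → Bool) : Matrix (ι → Bool) (ι → Bool) ℂ :=
  Matrix.of fun x y => if f x ≠ f y ∧ ∃ i : ι, y = flipSet x {i} then (1 : ℂ) else 0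

/-- Spectral sensitivity `λ(f)`: the spectral (operator) norm of the adjacency
matrix of the sensitivity graph of `f`. -/
noncomputable def specSens {ι : Type} [Fintype ι] [DecidableEq ι]
    (f : (ι → Bool) → Bool) : ℝ :=
  ‖Matrix.toEuclideanCLM (𝕜 := ℂ) (sensMatrix f)‖

/-!
Let `x` be an input of maximal sensitivity `s(f)`. Since `λ(f) ≤ s(f)`, we can leave free exactly
`k = ⌈λ(f)⌉` coordinates that are sensitive at `x` and fix all other coordinates as in `x`. The
restriction is still sensitive at `x` in all `k` free coordinates, and `√(s(g, x)) ≤ λ(g)` for every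
`g`, so `λ(f|ρ) ≥ √k ≥ √λ(f)`; as `λ(f)` is either `0` or at least `1`, also `k ≤ 2λ(f)`.
The bound `λ(f) ≤ s(f)` is Cauchy–Schwarz on each row of the adjacency matrix followed by double
counting of the edges of the sensitivity graph.
-/

open Matrix WithLp

section Flip

variable {ι : Type} [DecidableEq ι]

lemma flipSet_singleton_apply (x : ι → Bool) (i j : ι) :
    flipSet x {i} j = if j = i then !x j else x j := by
  simp [flipSet]

lemma flipSet_singleton_injective (x : ι → Bool) : Function.Injective fun i => flipSet x {i} := by
  intro i j h
  by_contra hij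
  simpa [flipSet_singleton_apply, hij] using congrFun h i

lemma flipSet_singleton_involutive (i : ι) :
    Function.Involutive fun x : ι → Bool => flipSet x {i} := by
  intro x
  funext j
  by_cases h : j = i <;> simp [flipSet_singleton_apply, h]

end Flip

section SensitivityGraph

variable {ι : Type} [Fintype ι] [DecidableEq ι]

def sensSet (f : (ι → Bool) → Bool) (x : ι → Bool) : Finset ι :=
  univ.filter fun i => f (flipSet x {i}) ≠ f x

lemma mem_sensSet_flipSet_singleton {f : (ι → Bool) → Bool} {x : ι → Bool} {i : ι} :
    i ∈ sensSet f (flipSet x {i}) ↔ i ∈ sensSet f x := by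
  simp only [sensSet, mem_filter, mem_univ, true_and, flipSet_singleton_involutive i x, ne_comm]

variable (f : (ι → Bool) → Bool)

lemma card_sensSet (x : ι → Bool) : (sensSet f x).card = sensAt f x := rfl

lemma mulVec_sensMatrix_apply (v : (ι → Bool) → ℂ) (x : ι → Bool) :
    (sensMatrix f *ᵥ v) x = ∑ i ∈ sensSet f x, v (flipSet x {i}) := by
  have hnbrs : univ.filter (fun y => f x ≠ f y ∧ ∃ i : ι, y = flipSet x {i})
      = (sensSet f x).image fun i => flipSet x {i} := by
    ext y
    simp only [sensSet, mem_filter, mem_univ, true_and, mem_image]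
    constructor
    · rintro ⟨hne, i, rfl⟩
      exact ⟨i, Ne.symm hne, rfl⟩
    · rintro ⟨i, hi, rfl⟩
      exact ⟨Ne.symm hi, i, rfl⟩
  rw [← sum_image fun i _ j _ h => flipSet_singleton_injective x h, ← hnbrs, sum_filter]
  simp only [mulVec, dotProduct, sensMatrix, of_apply, ite_mul, one_mul, zero_mul]

lemma sum_sum_sensSet_flipSet (g : (ι → Bool) → ℝ) :
    ∑ x, ∑ i ∈ sensSet f x, g (flipSet x {i}) = ∑ x, (sensAt f x : ℝ) * g x := by
  have hflip (i : ι) : ∑ x, (if i ∈ sensSet f x then g (flipSet x {i}) else 0)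
      = ∑ x, (if i ∈ sensSet f x then g x else 0) :=
    Fintype.sum_equiv (Function.Involutive.toPerm _ (flipSet_singleton_involutive i)) _ _
      fun x => by simp [mem_sensSet_flipSet_singleton]
  calc ∑ x, ∑ i ∈ sensSet f x, g (flipSet x {i})
      = ∑ i, ∑ x, (if i ∈ sensSet f x then g (flipSet x {i}) else 0) := by
        rw [sum_comm]; simp only [sum_ite_mem, univ_inter]
    _ = ∑ x, ∑ i ∈ sensSet f x, g x := by
        simp only [hflip]; rw [sum_comm]; simp only [sum_ite_mem, univ_inter]
    _ = ∑ x, (sensAt f x : ℝ) * g x := by simp [card_sensSet]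

lemma sensAt_le_sens (x : ι → Bool) : sensAt f x ≤ sens f :=
  le_sup (mem_univ x)

lemma sum_norm_mulVec_sensMatrix_sq_le (v : (ι → Bool) → ℂ) :
    ∑ x, ‖(sensMatrix f *ᵥ v) x‖ ^ 2 ≤ (sens f : ℝ) ^ 2 * ∑ x, ‖v x‖ ^ 2 := by
  have hrow (x : ι → Bool) : ‖(sensMatrix f *ᵥ v) x‖ ^ 2
      ≤ sens f * ∑ i ∈ sensSet f x, ‖v (flipSet x {i})‖ ^ 2 := by
    rw [mulVec_sensMatrix_apply]
    calc ‖∑ i ∈ sensSet f x, v (flipSet x {i})‖ ^ 2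
        ≤ (∑ i ∈ sensSet f x, ‖v (flipSet x {i})‖) ^ 2 := by gcongr; exact norm_sum_le _ _
      _ ≤ (sensSet f x).card * ∑ i ∈ sensSet f x, ‖v (flipSet x {i})‖ ^ 2 :=
        sq_sum_le_card_mul_sum_sq
      _ ≤ sens f * ∑ i ∈ sensSet f x, ‖v (flipSet x {i})‖ ^ 2 := by
        gcongr; exact_mod_cast sensAt_le_sens f x
  calc ∑ x, ‖(sensMatrix f *ᵥ v) x‖ ^ 2
      ≤ ∑ x, sens f * ∑ i ∈ sensSet f x, ‖v (flipSet x {i})‖ ^ 2 := sum_le_sum fun x _ => hrow x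
    _ = sens f * ∑ x, (sensAt f x : ℝ) * ‖v x‖ ^ 2 := by
      rw [← mul_sum, sum_sum_sensSet_flipSet f fun y => ‖v y‖ ^ 2]
    _ ≤ sens f * ∑ x, (sens f : ℝ) * ‖v x‖ ^ 2 := by
      gcongr with x; exact_mod_cast sensAt_le_sens f x
    _ = (sens f : ℝ) ^ 2 * ∑ x, ‖v x‖ ^ 2 := by rw [← mul_sum]; ring

lemma specSens_le_sens : specSens f ≤ sens f := by
  refine ContinuousLinearMap.opNorm_le_bound _ (Nat.cast_nonneg _) fun v => ?_
  rw [← toLp_ofLp 2 v, toEuclideanCLM_toLp, EuclideanSpace.norm_eq, EuclideanSpace.norm_eq,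
    ← Real.sqrt_sq (Nat.cast_nonneg (sens f)), ← Real.sqrt_mul (by positivity)]
  exact Real.sqrt_le_sqrt (sum_norm_mulVec_sensMatrix_sq_le f _)

/-- Test the adjacency operator on the indicator vector of the neighbours of `x`: its value at `x`
is `sensAt f x` while its norm is `√(sensAt f x)`. -/
lemma sqrt_sensAt_le_specSens (x : ι → Bool) : √(sensAt f x : ℝ) ≤ specSens f := by
  set d := sensAt f x
  set nbrs := (sensSet f x).image fun i => flipSet x {i}
  set w : (ι → Bool) → ℂ := fun y => if y ∈ nbrs then 1 else 0
  have hcard : nbrs.card = d := card_image_of_injective _ (flipSet_singleton_injective x)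
  have hnorm : ‖toLp 2 w‖ = √d := by
    rw [EuclideanSpace.norm_eq]
    simp [w, apply_ite, sum_ite_mem, hcard]
  have hval : (sensMatrix f *ᵥ w) x = d := by
    rw [mulVec_sensMatrix_apply, sum_congr rfl fun i hi => if_pos (mem_image_of_mem _ hi)]
    simp [d, ← card_sensSet]
  have hle : (d : ℝ) ≤ specSens f * √d := calc
    (d : ℝ) = ‖(toLp 2 (sensMatrix f *ᵥ w)) x‖ := by simp [hval]
    _ ≤ ‖toEuclideanCLM (𝕜 := ℂ) (sensMatrix f) (toLp 2 w)‖ := PiLp.norm_apply_le _ x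
    _ ≤ specSens f * √d := hnorm ▸ ContinuousLinearMap.le_opNorm _ _
  rcases (Real.sqrt_nonneg (d : ℝ)).eq_or_lt with h0 | hpos
  · exact h0 ▸ norm_nonneg _
  · exact le_of_mul_le_mul_right (by rwa [Real.mul_self_sqrt (Nat.cast_nonneg d)]) hpos

lemma specSens_eq_zero_or_one_le : specSens f = 0 ∨ 1 ≤ specSens f := by
  by_cases hs : sens f = 0
  · exact Or.inl <| le_antisymm (by exact_mod_cast hs ▸ specSens_le_sens f) (norm_nonneg _)
  · obtain ⟨x, -, hx⟩ := exists_mem_eq_sup univ univ_nonempty (sensAt f)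
    refine Or.inr <| le_trans ?_ (sqrt_sensAt_le_specSens f x)
    rw [Real.one_le_sqrt, ← (hx : sens f = sensAt f x)]
    exact_mod_cast Nat.one_le_iff_ne_zero.mpr hs

lemma natCeil_specSens_le_two_mul : (⌈specSens f⌉₊ : ℝ) ≤ 2 * specSens f := by
  rcases specSens_eq_zero_or_one_le f with h | h
  · simp [h]
  · exact Nat.ceil_le_two_mul (by linarith)

end SensitivityGraph

section Restriction

variable {ι : Type} [DecidableEq ι]

def fixOutside (x : ι → Bool) (T : Finset ι) : ι → Option Bool :=
  fun i => if i ∈ T then none else some (x i)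

lemma unsetCard_fixOutside [Fintype ι] (x : ι → Bool) (T : Finset ι) :
    unsetCard (fixOutside x T) = T.card := by
  simp [unsetCard, fixOutside]

lemma restrictBF_fixOutside_apply (f : (ι → Bool) → Bool) (x : ι → Bool) (T : Finset ι)
    (y : ι → Bool) : restrictBF f (fixOutside x T) y = f fun i => if i ∈ T then y i else x i := by
  simp only [restrictBF, fixOutside]
  congr 1; funext i
  split_ifs <;> rfl

lemma sensSet_restrictBF_fixOutside [Fintype ι] (f : (ι → Bool) → Bool) (x : ι → Bool)
    (T : Finset ι) : sensSet (restrictBF f (fixOutside x T)) x = T ∩ sensSet f x := by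
  ext i
  have hflip : (fun j => if j ∈ T then flipSet x {i} j else x j)
      = if i ∈ T then flipSet x {i} else x := by
    funext j
    by_cases hj : j = i <;> by_cases hi : i ∈ T <;> simp [flipSet_singleton_apply, hj, hi]
  by_cases hi : i ∈ T <;> simp [sensSet, restrictBF_fixOutside_apply, hflip, hi]

end Restriction

/-- for every `f` there is a restriction with `O(λ(f))` unset
variables such that `λ(f|_ρ) = Ω(√(λ(f)))`. -/
theorem specSens_lossy_condensation :
    ∃ c₁ c₂ : ℝ, 0 < c₁ ∧ 0 < c₂ ∧
      ∀ (n : ℕ) (f : (Fin n → Bool) → Bool),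
        ∃ ρ : Fin n → Option Bool,
          (unsetCard ρ : ℝ) ≤ c₁ * specSens f ∧
          c₂ * Real.sqrt (specSens f) ≤ specSens (restrictBF f ρ) := by
  refine ⟨2, 1, two_pos, one_pos, fun n f => ?_⟩
  obtain ⟨x, -, hx⟩ := exists_mem_eq_sup univ univ_nonempty (sensAt f)
  have hmax : sens f = (sensSet f x).card := hx
  have hk : ⌈specSens f⌉₊ ≤ (sensSet f x).card := Nat.ceil_le.mpr (hmax ▸ specSens_le_sens f)
  obtain ⟨T, hTx, hT⟩ := exists_subset_card_eq hk
  have hsens : sensAt (restrictBF f (fixOutside x T)) x = ⌈specSens f⌉₊ := by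
    rw [← card_sensSet, sensSet_restrictBF_fixOutside, inter_eq_left.mpr hTx, hT]
  refine ⟨fixOutside x T, ?_, ?_⟩
  · rw [unsetCard_fixOutside, hT]
    exact natCeil_specSens_le_two_mul f
  · calc 1 * √(specSens f) ≤ √(⌈specSens f⌉₊ : ℝ) := by
          rw [one_mul]; exact Real.sqrt_le_sqrt (Nat.le_ceil _)
      _ ≤ specSens (restrictBF f (fixOutside x T)) := hsens ▸ sqrt_sensAt_le_specSens _ x
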